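/- Energy decay along closed-loop trajectories: consider differentiable curves $\delta(t)\in\mathbb{R}^{\mathcal V}$, $\omega(t)\in\mathbb{R}^{\mathcal V}$, $E(t)\in\mathbb{R}^{\mathcal V}$ with $E_i(t)>0$, and $(P_g(t),P_l(t),v(t),\lambda_g(t),\lambda_l(t))$ satisfying: $\dot\delta_i=\omega_i$ for all $i\in\mathcal V$; $M_i\dot\omega_i=-P_i-A_i\omega_i+P_{gi}$ and $T_i\dot E_i=E_{fi}-E_i-(X_{di}-X'_{di})E_i^{-1}Q_i$ for $i\in\mathcal V_g$; the algebraic constraints $P_i=-A_i\omega_i-P_{li}$ and $Q_i=\bar Q_{li}$ for $i\in\mathcal V_l$; and the controller equations $\tau_g\dot P_g=-\nabla C(P_g)+\lambda_g-\omega_g$, $\tau_l\dot P_l=\nabla U(P_l)-\lambda_l+\omega_l$, $\tau_v\dot v=-D_{cg}^T\lambda_g-D_{cl}^T\lambda_l$, $\tau_{\lambda_g}\dot\lambda_g=D_{cg}v-P_g$, $\tau_{\lambda_l}\dot\lambda_l=D_{cl}v+P_l$, where $C$ is convex differentiable and $U$ concave differentiable. Let $(\bar\delta,\bar\omega=0,\bar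 E,\bar P_g,\bar P_l,\bar v,\bar\lambda_g,\bar\lambda_l)$ be an equilibrium of the same equations with $\bar E_i>0$. Define the shifted total energy $\bar H(t)=\bar H_p+\bar H_a+\bar H_c$, where $\bar H_p$ is the Bregman shift of $H_p$ (in the variables $(\delta,p_g,E)$ with $p_i=M_i\omega_i$) at the equilibrium, $\bar H_a(E_l)=\sum_{i\in\mathcal V_l}\big(\tfrac{\partial H_p}{\partial E_i}(\bar\delta,\bar E)\,E_i-\bar Q_{li}\log E_i\big)$, and $\bar H_c$ is the shifted controller storage from the $\tau$-weighted quadratic form. Then for all $t$: $\frac{d}{dt}\bar H = -\sum_{i\in\mathcal V_g}A_i\omega_i^2-\sum_{i\in\mathcal V_l}A_i\omega_i^2-\sum_{i\in\mathcal V_g}\frac{X_{di}-X'_{di}}{T_i}\Big(\frac{\partial\bar H}{\partial E_i}\Big)^2-(P_g-\bar P_g)^T(\nabla C(P_g)-\nabla C(\bar P_g))+(P_l-\bar P_l)^T(\nabla U(P_l)-\nabla U(\bar P_l)) \le 0$. -/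

import Mathlib

/-!
Energy decay along closed-loop trajectories of the structure-preserving power network
coupled with the primal-dual dynamic pricing algorithm.

Node set `V = Vg ∪ Vl` (the load set `Vl` is the complement of the generator set `Vg`),
symmetric susceptances `B i j = B j i` (zero for non-adjacent pairs, `B i i = 0`),
self-susceptances `Bs`.  `Ec` indexes the edges of the communication graph with
incidence matrix `Dc : V → Ec → ℝ` (rows `D_cg`, `D_cl`).  The momenta are
`p i = M i * ω i` (for generators).  Partial derivatives of the total shifted energy
with respect to `E i` are expressed via `deriv` of a one-variable slice
(`Function.update`), and the gradient `∇Hp(x̄)` appearing in the Bregman shift via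
`fderiv`.
-/

open Finset

/-- Active power injection `Pᵢ = ∑ⱼ Bᵢⱼ Eᵢ Eⱼ sin(δᵢ - δⱼ)`. -/
noncomputable def activeP {V : Type*} [Fintype V] (B : V → V → ℝ) (δ E : V → ℝ) (i : V) : ℝ :=
  ∑ j, B i j * E i * E j * Real.sin (δ i - δ j)

/-- Reactive power injection `Qᵢ = Bᵢᵢ Eᵢ² - ∑ⱼ Bᵢⱼ Eᵢ Eⱼ cos(δᵢ - δⱼ)`. -/
noncomputable def reactiveQ {V : Type*} [Fintype V] (B : V → V → ℝ) (Bs : V → ℝ)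
    (δ E : V → ℝ) (i : V) : ℝ :=
  Bs i * E i ^ 2 - ∑ j, B i j * E i * E j * Real.cos (δ i - δ j)

/-- The physical Hamiltonian `Hp` as a function of the state
`x = (δ, p_g, E) : (V → ℝ) × ({i // i ∈ Vg} → ℝ) × (V → ℝ)`:
`Hp x = ½ ∑_{i∈Vg} (pᵢ²/Mᵢ + (Eᵢ-Efᵢ)²/(Xdᵢ-Xd'ᵢ)) + ½ ∑_i Bsᵢ Eᵢ²
  - ∑_{(i,j)∈E} Bᵢⱼ Eᵢ Eⱼ cos(δᵢ-δⱼ)` (edge sum written as half the double sum). -/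
noncomputable def Hp {V : Type*} [Fintype V] [DecidableEq V] (Vg : Finset V)
    (M Xd Xd' Ef Bs : V → ℝ) (B : V → V → ℝ)
    (x : (V → ℝ) × ({i // i ∈ Vg} → ℝ) × (V → ℝ)) : ℝ :=
  (1/2) * ∑ i : {i // i ∈ Vg},
      ((x.2.1 i) ^ 2 / M i.1 + (x.2.2 i.1 - Ef i.1) ^ 2 / (Xd i.1 - Xd' i.1))
    + (1/2) * ∑ i, Bs i * (x.2.2 i) ^ 2
    - (1/2) * ∑ i, ∑ j, B i j * x.2.2 i * x.2.2 j * Real.cos (x.1 i - x.1 j)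

/-- Bregman shift of `Hp` at the equilibrium `x̄`:
`H̄p(x) = Hp(x) - (x - x̄)ᵀ ∇Hp(x̄) - Hp(x̄)`. -/
noncomputable def HbarP {V : Type*} [Fintype V] [DecidableEq V] (Vg : Finset V)
    (M Xd Xd' Ef Bs : V → ℝ) (B : V → V → ℝ)
    (xbar x : (V → ℝ) × ({i // i ∈ Vg} → ℝ) × (V → ℝ)) : ℝ :=
  Hp Vg M Xd Xd' Ef Bs B x
    - fderiv ℝ (Hp Vg M Xd Xd' Ef Bs B) xbar (x - xbar)
    - Hp Vg M Xd Xd' Ef Bs B xbar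

/-- Auxiliary energy `H̄ₐ(E_l) = ∑_{i∈Vl} (∂Hp/∂Eᵢ(x̄) · Eᵢ - Q̄ₗᵢ log Eᵢ)`. -/
noncomputable def HbarA {V : Type*} [Fintype V] [DecidableEq V] (Vg : Finset V)
    (M Xd Xd' Ef Bs : V → ℝ) (B : V → V → ℝ)
    (xbar : (V → ℝ) × ({i // i ∈ Vg} → ℝ) × (V → ℝ))
    (Qbar : {i // i ∉ Vg} → ℝ) (E : V → ℝ) : ℝ :=
  ∑ i : {i // i ∉ Vg},
    (fderiv ℝ (Hp Vg M Xd Xd' Ef Bs B) xbar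
        ((0 : V → ℝ), (0 : {i // i ∈ Vg} → ℝ), Pi.single i.1 (1:ℝ)) * E i.1
      - Qbar i * Real.log (E i.1))

/-- Shifted controller storage
`H̄c = ½(P_g-P̄_g)ᵀτ_g(P_g-P̄_g) + ½(P_l-P̄_l)ᵀτ_l(P_l-P̄_l) + ½(v-v̄)ᵀτ_v(v-v̄)
  + ½(λ_g-λ̄_g)ᵀτ_{lg}(λ_g-λ̄_g) + ½(λ_l-λ̄_l)ᵀτ_{ll}(λ_l-λ̄_l)`. -/
noncomputable def HbarC {V : Type*} [Fintype V] [DecidableEq V] (Vg : Finset V)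
    {Ec : Type*} [Fintype Ec]
    (τg τlg : {i // i ∈ Vg} → ℝ) (τl τll : {i // i ∉ Vg} → ℝ) (τv : Ec → ℝ)
    (Pgb lgb : {i // i ∈ Vg} → ℝ) (Plb llb : {i // i ∉ Vg} → ℝ) (vb : Ec → ℝ)
    (Pg lg : {i // i ∈ Vg} → ℝ) (Pl ll : {i // i ∉ Vg} → ℝ) (v : Ec → ℝ) : ℝ :=
  (1/2) * ∑ i, τg i * (Pg i - Pgb i) ^ 2
    + (1/2) * ∑ i, τl i * (Pl i - Plb i) ^ 2
    + (1/2) * ∑ e, τv e * (v e - vb e) ^ 2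
    + (1/2) * ∑ i, τlg i * (lg i - lgb i) ^ 2
    + (1/2) * ∑ i, τll i * (ll i - llb i) ^ 2

/-- Total shifted energy `H̄ = H̄p + H̄ₐ + H̄c` as a function of the full
(physical + controller) state. -/
noncomputable def HbarTot {V : Type*} [Fintype V] [DecidableEq V] (Vg : Finset V)
    {Ec : Type*} [Fintype Ec]
    (M Xd Xd' Ef Bs : V → ℝ) (B : V → V → ℝ)
    (xbar : (V → ℝ) × ({i // i ∈ Vg} → ℝ) × (V → ℝ))
    (Qbar : {i // i ∉ Vg} → ℝ)
    (τg τlg : {i // i ∈ Vg} → ℝ) (τl τll : {i // i ∉ Vg} → ℝ) (τv : Ec → ℝ)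
    (Pgb lgb : {i // i ∈ Vg} → ℝ) (Plb llb : {i // i ∉ Vg} → ℝ) (vb : Ec → ℝ)
    (δ : V → ℝ) (p : {i // i ∈ Vg} → ℝ) (E : V → ℝ)
    (Pg lg : {i // i ∈ Vg} → ℝ) (Pl ll : {i // i ∉ Vg} → ℝ) (v : Ec → ℝ) : ℝ :=
  HbarP Vg M Xd Xd' Ef Bs B xbar (δ, p, E)
    + HbarA Vg M Xd Xd' Ef Bs B xbar Qbar E
    + HbarC Vg τg τlg τl τll τv Pgb lgb Plb llb vb Pg lg Pl ll v

/-- The claimed value of `dH̄/dt`: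
`-∑_{i∈Vg} Aᵢωᵢ² - ∑_{i∈Vl} Aᵢωᵢ² - ∑_{i∈Vg} ((Xdᵢ-Xd'ᵢ)/Tᵢ)(∂H̄/∂Eᵢ)²
 - (P_g-P̄_g)ᵀ(∇C(P_g)-∇C(P̄_g)) + (P_l-P̄_l)ᵀ(∇U(P_l)-∇U(P̄_l))`,
where `∂H̄/∂Eᵢ` is the partial derivative of the total shifted energy in the
`Eᵢ`-direction at the current state. -/
noncomputable def decayRate {V : Type*} [Fintype V] [DecidableEq V] (Vg : Finset V)
    {Ec : Type*} [Fintype Ec]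
    (M A T Xd Xd' Ef Bs : V → ℝ) (B : V → V → ℝ)
    (xbar : (V → ℝ) × ({i // i ∈ Vg} → ℝ) × (V → ℝ))
    (Qbar : {i // i ∉ Vg} → ℝ)
    (τg τlg : {i // i ∈ Vg} → ℝ) (τl τll : {i // i ∉ Vg} → ℝ) (τv : Ec → ℝ)
    (Pgb lgb : {i // i ∈ Vg} → ℝ) (Plb llb : {i // i ∉ Vg} → ℝ) (vb : Ec → ℝ)
    (gradC : ({i // i ∈ Vg} → ℝ) → {i // i ∈ Vg} → ℝ)
    (gradU : ({i // i ∉ Vg} → ℝ) → {i // i ∉ Vg} → ℝ)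
    (δ : V → ℝ) (ω : V → ℝ) (E : V → ℝ)
    (Pg lg : {i // i ∈ Vg} → ℝ) (Pl ll : {i // i ∉ Vg} → ℝ) (v : Ec → ℝ) : ℝ :=
  -(∑ i : {i // i ∈ Vg}, A i.1 * ω i.1 ^ 2)
    - ∑ i : {i // i ∉ Vg}, A i.1 * ω i.1 ^ 2
    - ∑ i : {i // i ∈ Vg}, ((Xd i.1 - Xd' i.1) / T i.1) *
        (deriv (fun s => HbarTot Vg M Xd Xd' Ef Bs B xbar Qbar τg τlg τl τll τv
          Pgb lgb Plb llb vb δ (fun j => M j.1 * ω j.1) (Function.update E i.1 s)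
          Pg lg Pl ll v) (E i.1)) ^ 2
    - ∑ i : {i // i ∈ Vg}, (Pg i - Pgb i) * (gradC Pg i - gradC Pgb i)
    + ∑ i : {i // i ∉ Vg}, (Pl i - Plb i) * (gradU Pl i - gradU Plb i)

/-!
The closed loop is a power-preserving interconnection of two incrementally passive systems.
Along the network, the Bregman-shifted Hamiltonian plus the auxiliary load energy changes at the
rate `-(damping) - (excitation losses) + ω_gᵀ(P_g - P̄_g) - ω_lᵀ(P_l - P̄_l)`: the equilibrium
removes the linear terms, and at the loads the constraint `Qᵢ = Q̄ᵢ` makes `∂Hp/∂Eᵢ` cancel the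
derivative of `-Q̄ᵢ log Eᵢ`, so the unknown load voltage rates drop out. The controller storage
changes at the rate `-(P_g - P̄_g)ᵀ(∇C - ∇C̄) + (P_l - P̄_l)ᵀ(∇U - ∇Ū)` minus the same port terms,
its communication part being skew-symmetric. Summing, the port terms cancel, and what remains is
nonpositive because gradients of convex (concave) functions are monotone (antitone).
-/

open Filter Function

section ConvexGradient

lemma update_add_eq_add_single {ι : Type*} [DecidableEq ι] (a : ι → ℝ) (i : ι) (x : ℝ) :
    update a i (a i + x) = a + Pi.single i x := by
  ext j
  rcases eq_or_ne j i with rfl | h <;> simp [*]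

variable {ι : Type*} [Fintype ι] [DecidableEq ι]

/-- The point `a - (s / n) • (b - a)` is the barycentre of the `n` points obtained from `a` by
moving a single coordinate `i` by `-s (bᵢ - aᵢ)`; Jensen's inequality at these points, combined
with convexity along the line through `a` and `b`, gives the bound. -/
lemma ConvexOn.mul_sub_le_sum_update [Nonempty ι] {f : (ι → ℝ) → ℝ}
    (hf : ConvexOn ℝ Set.univ f) (a b : ι → ℝ) {s : ℝ} (hs : 0 ≤ s) :
    s * (f a - f b) ≤ ∑ i, (f (update a i (a i + -s * (b i - a i))) - f a) := by
  set n : ℝ := (Fintype.card ι : ℝ)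
  have hn : 0 < n := by simp [n, Fintype.card_pos]
  set τ := s / n
  have hτ : 0 ≤ τ := by positivity
  set S := ∑ i, f (update a i (a i + -s * (b i - a i)))
  have hjensen : n * f (a - τ • (b - a)) ≤ S := by
    have h := hf.map_sum_le (t := univ) (w := fun _ => n⁻¹)
      (p := fun i => update a i (a i + -s * (b i - a i)))
      (fun _ _ => by positivity) (by simp [n]) (fun _ _ => Set.mem_univ _)
    have hbary : ∑ i, n⁻¹ • update a i (a i + -s * (b i - a i)) = a - τ • (b - a) := by
      simp only [update_add_eq_add_single, smul_add, sum_add_distrib, ← smul_sum,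
        Finset.univ_sum_single (fun i => -s * (b i - a i))]
      ext j
      simp [τ, n]
      field_simp
      ring
    rw [hbary] at h
    simp only [smul_eq_mul, ← mul_sum] at h
    rwa [← le_inv_mul_iff₀ hn]
  have hline : (1 + τ) * f a ≤ f (a - τ • (b - a)) + τ * f b := by
    have h := hf.2 (Set.mem_univ (a - τ • (b - a))) (Set.mem_univ b)
      (show (0 : ℝ) ≤ (1 + τ)⁻¹ by positivity) (show 0 ≤ τ * (1 + τ)⁻¹ by positivity)
      (by field_simp)
    have hpt : (1 + τ)⁻¹ • (a - τ • (b - a)) + (τ * (1 + τ)⁻¹) • b = a := by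
      ext j
      simp only [Pi.add_apply, Pi.smul_apply, Pi.sub_apply, smul_eq_mul]
      field_simp
      ring
    rw [hpt, smul_eq_mul, smul_eq_mul] at h
    have h1 : 0 < 1 + τ := by positivity
    calc (1 + τ) * f a ≤ (1 + τ) * ((1 + τ)⁻¹ * f (a - τ • (b - a)) + τ * (1 + τ)⁻¹ * f b) :=
          mul_le_mul_of_nonneg_left h h1.le
      _ = f (a - τ • (b - a)) + τ * f b := by field_simp
  rw [sum_sub_distrib, sum_const, card_univ, nsmul_eq_mul]
  calc s * (f a - f b) = n * (τ * (f a - f b)) := by simp only [τ]; field_simp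
    _ ≤ n * (f (a - τ • (b - a)) - f a) := mul_le_mul_of_nonneg_left (by linarith) hn.le
    _ ≤ S - n * f a := by linarith

theorem ConvexOn.sum_sub_mul_le_of_hasDerivAt_update {f : (ι → ℝ) → ℝ} {a g : ι → ℝ}
    (hf : ConvexOn ℝ Set.univ f) (hg : ∀ i, HasDerivAt (fun s => f (update a i s)) (g i) (a i))
    (b : ι → ℝ) : ∑ i, (b i - a i) * g i ≤ f b - f a := by
  rcases isEmpty_or_nonempty ι with _ | _
  · simp [Subsingleton.elim b a]
  set φ : ℝ → ℝ := fun u => ∑ i, (f (update a i (a i + u * (b i - a i))) - f a)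
  have hφ : HasDerivAt φ (∑ i, (b i - a i) * g i) 0 := by
    refine HasDerivAt.fun_sum fun i _ => HasDerivAt.sub_const (f a) ?_
    have hline := (hasDerivAt_mul_const (x := 0) (b i - a i)).const_add (a i)
    exact ((hg i).comp_of_eq 0 hline (by simp)).congr_deriv (mul_comm _ _)
  have hslope : ∀ u ∈ Set.Iio (0 : ℝ), u⁻¹ • (φ (0 + u) - φ 0) ≤ f b - f a := by
    intro u (hu : u < 0)
    have hφ0 : φ 0 = 0 := by simp [φ]
    have key := hf.mul_sub_le_sum_update a b (neg_nonneg.2 hu.le)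
    simp only [neg_neg] at key
    rw [zero_add, hφ0, sub_zero, smul_eq_mul, ← div_eq_inv_mul, div_le_iff_of_neg hu]
    linarith
  exact le_of_tendsto hφ.tendsto_slope_zero_left (eventually_nhdsWithin_of_forall hslope)

theorem ConvexOn.sum_sub_mul_sub_nonneg {f : (ι → ℝ) → ℝ} {g : (ι → ℝ) → ι → ℝ}
    (hf : ConvexOn ℝ Set.univ f)
    (hg : ∀ x i, HasDerivAt (fun s => f (update x i s)) (g x i) (x i)) (a b : ι → ℝ) :
    0 ≤ ∑ i, (b i - a i) * (g b i - g a i) := by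
  have hab := hf.sum_sub_mul_le_of_hasDerivAt_update (hg a) b
  have hba := hf.sum_sub_mul_le_of_hasDerivAt_update (hg b) a
  have h : ∑ i, (b i - a i) * (g b i - g a i)
      = -∑ i, (a i - b i) * g b i - ∑ i, (b i - a i) * g a i := by
    rw [← sum_neg_distrib, ← sum_sub_distrib]
    exact sum_congr rfl fun i _ => by ring
  linarith

theorem ConcaveOn.sum_sub_mul_sub_nonpos {f : (ι → ℝ) → ℝ} {g : (ι → ℝ) → ι → ℝ}
    (hf : ConcaveOn ℝ Set.univ f)
    (hg : ∀ x i, HasDerivAt (fun s => f (update x i s)) (g x i) (x i)) (a b : ι → ℝ) :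
    ∑ i, (b i - a i) * (g b i - g a i) ≤ 0 := by
  have h := hf.neg.sum_sub_mul_sub_nonneg (fun x i => (hg x i).neg) a b
  simp only [mul_sub, mul_neg, sum_sub_distrib, sum_neg_distrib] at h ⊢
  linarith

end ConvexGradient

lemma hasDerivAt_bregman_comp {F : Type*} [NormedAddCommGroup F] [NormedSpace ℝ F]
    {H : F → ℝ} (hH : Differentiable ℝ H) {γ : ℝ → F} {γ' : F} {t : ℝ}
    (hγ : HasDerivAt γ γ' t) (xbar : F) :
    HasDerivAt (fun s => H (γ s) - fderiv ℝ H xbar (γ s - xbar) - H xbar)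
      (fderiv ℝ H (γ t) γ' - fderiv ℝ H xbar γ') t :=
  (((hH (γ t)).hasFDerivAt.comp_hasDerivAt t hγ).sub
    ((fderiv ℝ H xbar).hasFDerivAt.comp_hasDerivAt t (hγ.sub_const xbar))).sub_const (H xbar)

lemma hasDerivAt_half_sum_mul_sq_sub {κ : Type*} [Fintype κ] {τ c F : κ → ℝ}
    {x : ℝ → κ → ℝ} {t : ℝ} (hτ : ∀ k, τ k ≠ 0)
    (hx : ∀ k, HasDerivAt (fun s => x s k) (F k / τ k) t) :
    HasDerivAt (fun s => (1/2) * ∑ k, τ k * (x s k - c k) ^ 2) (∑ k, (x t k - c k) * F k) t :=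
  ((HasDerivAt.fun_sum fun k (_ : k ∈ univ) =>
    (((hx k).sub_const (c k)).pow 2).const_mul (τ k)).const_mul (1/2 : ℝ)).congr_deriv
    (by rw [mul_sum]; exact sum_congr rfl fun k _ => by field_simp [hτ k]; ring)

lemma sum_eq_sum_mem_add_sum_not_mem {V : Type*} [Fintype V] [DecidableEq V] (Vg : Finset V)
    (f : V → ℝ) : ∑ i, f i = ∑ i : {i // i ∈ Vg}, f i + ∑ i : {i // i ∉ Vg}, f i := by
  rw [← sum_add_sum_compl Vg f, sum_subtype Vg (fun _ => Iff.rfl),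
    sum_subtype Vgᶜ (fun _ => mem_compl)]

lemma sum_ite_mem_mul {V : Type*} [Fintype V] [DecidableEq V] (Vg : Finset V) (f x : V → ℝ) :
    ∑ i, (if i ∈ Vg then f i else 0) * x i = ∑ i : {i // i ∈ Vg}, f i * x i := by
  simp only [ite_mul, zero_mul, sum_ite_mem, univ_inter]
  exact (sum_coe_sort Vg fun i => f i * x i).symm

lemma sum_sum_add_swap {V : Type*} [Fintype V] (T : V → V → ℝ) :
    ∑ i, ∑ j, (T i j + T j i) = 2 * ∑ i, ∑ j, T i j := by
  simp only [sum_add_distrib]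
  rw [sum_comm (f := fun i j => T j i)]
  ring

lemma sum_mul_sub {ι : Type*} [Fintype ι] (D x y : ι → ℝ) :
    ∑ i, D i * (x i - y i) = ∑ i, D i * x i - ∑ i, D i * y i := by
  simp only [mul_sub, sum_sub_distrib]

lemma sum_mul_sum_comm {ι κ : Type*} [Fintype ι] [Fintype κ] (D : ι → κ → ℝ) (x : κ → ℝ)
    (y : ι → ℝ) : ∑ e, x e * ∑ i, D i e * y i = ∑ i, y i * ∑ e, D i e * x e := by
  simp only [mul_sum]
  rw [sum_comm]
  exact sum_congr rfl fun _ _ => sum_congr rfl fun _ _ => by ring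

lemma sum_mul_incidence_lossless {ιg ιl κ : Type*} [Fintype ιg] [Fintype ιl] [Fintype κ]
    (Dg : ιg → κ → ℝ) (Dl : ιl → κ → ℝ) (x : κ → ℝ) (yg : ιg → ℝ) (yl : ιl → ℝ) :
    ∑ e, x e * (-(∑ i, Dg i e * yg i) - ∑ i, Dl i e * yl i)
      + ∑ i, yg i * ∑ e, Dg i e * x e + ∑ i, yl i * ∑ e, Dl i e * x e = 0 := by
  simp only [mul_sub, mul_neg, sum_sub_distrib, sum_neg_distrib]
  rw [sum_mul_sum_comm Dg, sum_mul_sum_comm Dl]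
  ring

section Network

variable {V : Type*} [Fintype V]

/-- `∂/∂Eᵢ` of the network part `½ ∑ Bsᵢ Eᵢ² - ½ ∑ᵢⱼ Bᵢⱼ Eᵢ Eⱼ cos(δᵢ - δⱼ)` of `Hp`. -/
noncomputable def reactiveCurrent (B : V → V → ℝ) (Bs : V → ℝ) (δ E : V → ℝ) (i : V) : ℝ :=
  Bs i * E i - ∑ j, B i j * E j * Real.cos (δ i - δ j)

lemma reactiveQ_eq_mul_reactiveCurrent (B : V → V → ℝ) (Bs : V → ℝ) (δ E : V → ℝ) (i : V) :
    reactiveQ B Bs δ E i = E i * reactiveCurrent B Bs δ E i := by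
  simp only [reactiveQ, reactiveCurrent, mul_sub, mul_sum]
  congr 1
  · ring
  · exact sum_congr rfl fun j _ => by ring

lemma hasDerivAt_networkEnergy (B : V → V → ℝ) (Bs : V → ℝ) (hB : ∀ i j, B i j = B j i)
    {γδ γE : ℝ → V → ℝ} {dδ dE : V → ℝ} {t : ℝ}
    (hδ : ∀ i, HasDerivAt (fun s => γδ s i) (dδ i) t)
    (hE : ∀ i, HasDerivAt (fun s => γE s i) (dE i) t) :
    HasDerivAt (fun s => (1/2) * ∑ i, Bs i * γE s i ^ 2
        - (1/2) * ∑ i, ∑ j, B i j * γE s i * γE s j * Real.cos (γδ s i - γδ s j))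
      (∑ i, activeP B (γδ t) (γE t) i * dδ i
        + ∑ i, reactiveCurrent B Bs (γδ t) (γE t) i * dE i) t := by
  set T : V → V → ℝ := fun i j => B i j * γE t j * Real.cos (γδ t i - γδ t j) * dE i
    - B i j * γE t i * γE t j * Real.sin (γδ t i - γδ t j) * dδ i
  -- by symmetry of `B`, the derivative of the `(i, j)` term is `T i j + T j i`
  have hij : ∀ i j, HasDerivAt (fun s => B i j * γE s i * γE s j * Real.cos (γδ s i - γδ s j))
      (T i j + T j i) t := by
    intro i j
    refine ((((hE i).const_mul (B i j)).mul (hE j)).mul ((hδ i).sub (hδ j)).cos).congr_deriv ?_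
    simp only [T, hB j i, Pi.mul_apply, Pi.sub_apply, ← neg_sub (γδ t i), Real.cos_neg,
      Real.sin_neg]
    ring
  refine (((HasDerivAt.fun_sum fun i _ => ((hE i).pow 2).const_mul (Bs i)).const_mul
    (1/2 : ℝ)).sub ((HasDerivAt.fun_sum fun i _ =>
      HasDerivAt.fun_sum fun j _ => hij i j).const_mul (1/2 : ℝ))).congr_deriv ?_
  rw [sum_sum_add_swap]
  simp only [T, activeP, reactiveCurrent, sub_mul, sum_mul, sum_sub_distrib, mul_sum]
  ring_nf

end Network

section Hamiltonian

variable {V : Type*} [Fintype V] [DecidableEq V] (Vg : Finset V)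
  (M Xd Xd' Ef Bs : V → ℝ) (B : V → V → ℝ)

noncomputable def gradEHp (δ E : V → ℝ) (i : V) : ℝ :=
  (if i ∈ Vg then (E i - Ef i) / (Xd i - Xd' i) else 0) + reactiveCurrent B Bs δ E i

lemma hasDerivAt_Hp_comp (hB : ∀ i j, B i j = B j i)
    {γδ γE : ℝ → V → ℝ} {γp : ℝ → {i // i ∈ Vg} → ℝ} {dδ dE : V → ℝ}
    {dp : {i // i ∈ Vg} → ℝ} {t : ℝ}
    (hδ : ∀ i, HasDerivAt (fun s => γδ s i) (dδ i) t)
    (hp : ∀ i, HasDerivAt (fun s => γp s i) (dp i) t)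
    (hE : ∀ i, HasDerivAt (fun s => γE s i) (dE i) t) :
    HasDerivAt (fun s => Hp Vg M Xd Xd' Ef Bs B (γδ s, γp s, γE s))
      (∑ i, activeP B (γδ t) (γE t) i * dδ i + ∑ i, γp t i / M i * dp i
        + ∑ i, gradEHp Vg Xd Xd' Ef Bs B (γδ t) (γE t) i * dE i) t := by
  have hgen : HasDerivAt (fun s => (1/2) * ∑ i : {i // i ∈ Vg},
        ((γp s i) ^ 2 / M i + (γE s i - Ef i) ^ 2 / (Xd i - Xd' i)))
      (∑ i : {i // i ∈ Vg}, (γp t i / M i * dp i + (γE t i - Ef i) / (Xd i - Xd' i) * dE i)) t := by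
    refine ((HasDerivAt.fun_sum fun i (_ : i ∈ univ) => (((hp i).pow 2).div_const (M i)).add
      ((((hE i).sub_const (Ef i)).pow 2).div_const (Xd i - Xd' i))).const_mul
        (1/2 : ℝ)).congr_deriv ?_
    rw [mul_sum]
    exact sum_congr rfl fun i _ => by ring
  have hHp : (fun s => Hp Vg M Xd Xd' Ef Bs B (γδ s, γp s, γE s)) = fun s =>
      (1/2) * ∑ i : {i // i ∈ Vg}, ((γp s i) ^ 2 / M i + (γE s i - Ef i) ^ 2 / (Xd i - Xd' i))
      + ((1/2) * ∑ i, Bs i * γE s i ^ 2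
        - (1/2) * ∑ i, ∑ j, B i j * γE s i * γE s j * Real.cos (γδ s i - γδ s j)) := by
    ext s
    simp only [Hp]
    ring
  rw [hHp]
  refine (hgen.add (hasDerivAt_networkEnergy B Bs hB hδ hE)).congr_deriv ?_
  simp only [gradEHp, add_mul, sum_add_distrib, sum_ite_mem_mul]
  ring

lemma differentiable_Hp : Differentiable ℝ (Hp Vg M Xd Xd' Ef Bs B) := by
  unfold Hp
  fun_prop

lemma fderiv_Hp_apply (hB : ∀ i j, B i j = B j i)
    (x u : (V → ℝ) × ({i // i ∈ Vg} → ℝ) × (V → ℝ)) :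
    fderiv ℝ (Hp Vg M Xd Xd' Ef Bs B) x u
      = ∑ i, activeP B x.1 x.2.2 i * u.1 i + ∑ i, x.2.1 i / M i * u.2.1 i
        + ∑ i, gradEHp Vg Xd Xd' Ef Bs B x.1 x.2.2 i * u.2.2 i := by
  have hδ : ∀ i, HasDerivAt (fun s : ℝ => x.1 i + s * u.1 i) (u.1 i) 0 :=
    fun i => (hasDerivAt_mul_const _).const_add _
  have hp : ∀ i, HasDerivAt (fun s : ℝ => x.2.1 i + s * u.2.1 i) (u.2.1 i) 0 :=
    fun i => (hasDerivAt_mul_const _).const_add _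
  have hE : ∀ i, HasDerivAt (fun s : ℝ => x.2.2 i + s * u.2.2 i) (u.2.2 i) 0 :=
    fun i => (hasDerivAt_mul_const _).const_add _
  have hline := (differentiable_Hp Vg M Xd Xd' Ef Bs B x).hasFDerivAt.comp_hasDerivAt_of_eq 0
    ((hasDerivAt_pi.2 hδ).prodMk ((hasDerivAt_pi.2 hp).prodMk (hasDerivAt_pi.2 hE)))
    (by simp)
  simpa using hline.unique (hasDerivAt_Hp_comp Vg M Xd Xd' Ef Bs B hB hδ hp hE)

lemma fderiv_Hp_single (hB : ∀ i j, B i j = B j i)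
    (x : (V → ℝ) × ({i // i ∈ Vg} → ℝ) × (V → ℝ)) (i : V) :
    fderiv ℝ (Hp Vg M Xd Xd' Ef Bs B) x ((0 : V → ℝ), (0 : {i // i ∈ Vg} → ℝ), Pi.single i 1)
      = gradEHp Vg Xd Xd' Ef Bs B x.1 x.2.2 i := by
  simp [fderiv_Hp_apply Vg M Xd Xd' Ef Bs B hB, Pi.single_apply]

end Hamiltonian

section ShiftedEnergy

variable {V : Type*} [Fintype V] [DecidableEq V] {Vg : Finset V}
  {M Xd Xd' Ef Bs : V → ℝ} {B : V → V → ℝ}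
  (xbar : (V → ℝ) × ({i // i ∈ Vg} → ℝ) × (V → ℝ)) (Qbar : {i // i ∉ Vg} → ℝ)

lemma hasDerivAt_HbarA_comp (hB : ∀ i j, B i j = B j i) {γE : ℝ → V → ℝ} {dE : V → ℝ} {t : ℝ}
    (hE : ∀ i, HasDerivAt (fun s => γE s i) (dE i) t) (hE0 : ∀ i ∉ Vg, γE t i ≠ 0) :
    HasDerivAt (fun s => HbarA Vg M Xd Xd' Ef Bs B xbar Qbar (γE s))
      (∑ i : {i // i ∉ Vg},
        (gradEHp Vg Xd Xd' Ef Bs B xbar.1 xbar.2.2 i - Qbar i / γE t i) * dE i) t := by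
  refine (HasDerivAt.fun_sum fun (i : {i // i ∉ Vg}) (_ : i ∈ univ) =>
    ((hE i).const_mul _).sub (((hE i).log (hE0 i i.2)).const_mul (Qbar i))).congr_deriv ?_
  refine sum_congr rfl fun i _ => ?_
  rw [fderiv_Hp_single Vg M Xd Xd' Ef Bs B hB]
  ring

lemma hasDerivAt_HbarP_add_HbarA_comp (hB : ∀ i j, B i j = B j i)
    {γδ γE : ℝ → V → ℝ} {γp : ℝ → {i // i ∈ Vg} → ℝ} {dδ dE : V → ℝ}
    {dp : {i // i ∈ Vg} → ℝ} {t : ℝ}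
    (hδ : ∀ i, HasDerivAt (fun s => γδ s i) (dδ i) t)
    (hp : ∀ i, HasDerivAt (fun s => γp s i) (dp i) t)
    (hE : ∀ i, HasDerivAt (fun s => γE s i) (dE i) t) (hE0 : ∀ i ∉ Vg, γE t i ≠ 0) :
    HasDerivAt (fun s => HbarP Vg M Xd Xd' Ef Bs B xbar (γδ s, γp s, γE s)
        + HbarA Vg M Xd Xd' Ef Bs B xbar Qbar (γE s))
      (∑ i : {i // i ∈ Vg}, ((activeP B (γδ t) (γE t) i - activeP B xbar.1 xbar.2.2 i) * dδ i
          + (γp t i - xbar.2.1 i) / M i * dp i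
          + (gradEHp Vg Xd Xd' Ef Bs B (γδ t) (γE t) i
            - gradEHp Vg Xd Xd' Ef Bs B xbar.1 xbar.2.2 i) * dE i)
        + ∑ i : {i // i ∉ Vg}, ((activeP B (γδ t) (γE t) i - activeP B xbar.1 xbar.2.2 i) * dδ i
          + (gradEHp Vg Xd Xd' Ef Bs B (γδ t) (γE t) i - Qbar i / γE t i) * dE i)) t := by
  have hγ : HasDerivAt (fun s => (γδ s, γp s, γE s)) (dδ, dp, dE) t :=
    (hasDerivAt_pi.2 hδ).prodMk ((hasDerivAt_pi.2 hp).prodMk (hasDerivAt_pi.2 hE))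
  refine ((hasDerivAt_bregman_comp (differentiable_Hp Vg M Xd Xd' Ef Bs B) hγ xbar).add
    (hasDerivAt_HbarA_comp xbar Qbar hB hE hE0)).congr_deriv ?_
  simp only [fderiv_Hp_apply Vg M Xd Xd' Ef Bs B hB, sum_eq_sum_mem_add_sum_not_mem Vg,
    sum_add_distrib, sum_sub_distrib, sub_mul, sub_div]
  ring

lemma HbarA_update_of_mem {i : V} (hi : i ∈ Vg) (E : V → ℝ) (s : ℝ) :
    HbarA Vg M Xd Xd' Ef Bs B xbar Qbar (update E i s) = HbarA Vg M Xd Xd' Ef Bs B xbar Qbar E := by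
  refine sum_congr rfl fun j _ => ?_
  rw [update_of_ne (ne_of_mem_of_not_mem hi j.2).symm]

lemma hasDerivAt_HbarTot_update {Ec : Type*} [Fintype Ec] (hB : ∀ i j, B i j = B j i)
    (τg τlg : {i // i ∈ Vg} → ℝ) (τl τll : {i // i ∉ Vg} → ℝ) (τv : Ec → ℝ)
    (Pgb lgb : {i // i ∈ Vg} → ℝ) (Plb llb : {i // i ∉ Vg} → ℝ) (vb : Ec → ℝ)
    (δ : V → ℝ) (p : {i // i ∈ Vg} → ℝ) (E : V → ℝ)
    (Pg lg : {i // i ∈ Vg} → ℝ) (Pl ll : {i // i ∉ Vg} → ℝ) (v : Ec → ℝ) {i : V} (hi : i ∈ Vg) :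
    HasDerivAt (fun s => HbarTot Vg M Xd Xd' Ef Bs B xbar Qbar τg τlg τl τll τv
        Pgb lgb Plb llb vb δ p (update E i s) Pg lg Pl ll v)
      (gradEHp Vg Xd Xd' Ef Bs B δ E i - gradEHp Vg Xd Xd' Ef Bs B xbar.1 xbar.2.2 i) (E i) := by
  have hγ : HasDerivAt (fun s => (δ, p, update E i s))
      (((0 : V → ℝ), (0 : {i // i ∈ Vg} → ℝ), Pi.single i 1) :
        (V → ℝ) × ({i // i ∈ Vg} → ℝ) × (V → ℝ)) (E i) :=
    (hasDerivAt_const _ _).prodMk ((hasDerivAt_const _ _).prodMk (hasDerivAt_update E i (E i)))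
  have h := hasDerivAt_bregman_comp (differentiable_Hp Vg M Xd Xd' Ef Bs B) hγ xbar
  rw [fderiv_Hp_single Vg M Xd Xd' Ef Bs B hB, fderiv_Hp_single Vg M Xd Xd' Ef Bs B hB,
    update_eq_self] at h
  simp only [HbarTot, HbarP, HbarA_update_of_mem xbar Qbar hi]
  exact (h.add_const _).add_const _

end ShiftedEnergy

section Controller

variable {V : Type*} [Fintype V] [DecidableEq V] {Vg : Finset V} {Ec : Type*} [Fintype Ec]
  {Dc : V → Ec → ℝ} {Pg lg Pgb lgb : {i // i ∈ Vg} → ℝ} {Pl ll Plb llb : {i // i ∉ Vg} → ℝ}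
  {v vb : Ec → ℝ}

lemma primalDual_communication_balance
    (heqv : ∀ e, 0 = -(∑ i : {i // i ∈ Vg}, Dc i.1 e * lgb i)
      - ∑ i : {i // i ∉ Vg}, Dc i.1 e * llb i)
    (heqlg : ∀ i, 0 = ∑ e, Dc i.1 e * vb e - Pgb i)
    (heqll : ∀ i, 0 = ∑ e, Dc i.1 e * vb e + Plb i) :
    ∑ e, (v e - vb e) * (-(∑ i : {i // i ∈ Vg}, Dc i.1 e * lg i)
        - ∑ i : {i // i ∉ Vg}, Dc i.1 e * ll i)
      + ∑ i, (lg i - lgb i) * (∑ e, Dc i.1 e * v e - Pg i)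
      + ∑ i, (ll i - llb i) * (∑ e, Dc i.1 e * v e + Pl i)
    = -∑ i, (lg i - lgb i) * (Pg i - Pgb i) + ∑ i, (ll i - llb i) * (Pl i - Plb i) := by
  have hv : ∑ e, (v e - vb e) * (-(∑ i : {i // i ∈ Vg}, Dc i.1 e * lg i)
        - ∑ i : {i // i ∉ Vg}, Dc i.1 e * ll i)
      = ∑ e, (v e - vb e) * (-(∑ i : {i // i ∈ Vg}, Dc i.1 e * (lg i - lgb i))
        - ∑ i : {i // i ∉ Vg}, Dc i.1 e * (ll i - llb i)) :=
    sum_congr rfl fun e _ => by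
      rw [sum_mul_sub, sum_mul_sub]
      linear_combination (vb e - v e) * heqv e
  have hlg : ∑ i, (lg i - lgb i) * (∑ e, Dc i.1 e * v e - Pg i)
      = ∑ i, (lg i - lgb i) * ∑ e, Dc i.1 e * (v e - vb e)
        - ∑ i, (lg i - lgb i) * (Pg i - Pgb i) := by
    rw [← sum_sub_distrib]
    refine sum_congr rfl fun i _ => ?_
    rw [sum_mul_sub]
    linear_combination (lgb i - lg i) * heqlg i
  have hll : ∑ i, (ll i - llb i) * (∑ e, Dc i.1 e * v e + Pl i)
      = ∑ i, (ll i - llb i) * ∑ e, Dc i.1 e * (v e - vb e)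
        + ∑ i, (ll i - llb i) * (Pl i - Plb i) := by
    rw [← sum_add_distrib]
    refine sum_congr rfl fun i _ => ?_
    rw [sum_mul_sub]
    linear_combination (llb i - ll i) * heqll i
  have hloss := sum_mul_incidence_lossless (fun (i : {i // i ∈ Vg}) e => Dc i e)
    (fun (i : {i // i ∉ Vg}) e => Dc i e) (v - vb) (lg - lgb) (ll - llb)
  simp only [Pi.sub_apply] at hloss
  rw [hv, hlg, hll]
  linear_combination hloss

lemma primalDual_power_balance (gradC : ({i // i ∈ Vg} → ℝ) → {i // i ∈ Vg} → ℝ)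
    (gradU : ({i // i ∉ Vg} → ℝ) → {i // i ∉ Vg} → ℝ)
    (ωg : {i // i ∈ Vg} → ℝ) (ωl : {i // i ∉ Vg} → ℝ)
    (heqPg : ∀ i, 0 = -(gradC Pgb i) + lgb i - 0)
    (heqPlc : ∀ i, 0 = gradU Plb i - llb i + 0)
    (heqv : ∀ e, 0 = -(∑ i : {i // i ∈ Vg}, Dc i.1 e * lgb i)
      - ∑ i : {i // i ∉ Vg}, Dc i.1 e * llb i)
    (heqlg : ∀ i, 0 = ∑ e, Dc i.1 e * vb e - Pgb i)
    (heqll : ∀ i, 0 = ∑ e, Dc i.1 e * vb e + Plb i) :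
    ∑ i, (Pg i - Pgb i) * (-(gradC Pg i) + lg i - ωg i)
      + ∑ i, (Pl i - Plb i) * (gradU Pl i - ll i + ωl i)
      + ∑ e, (v e - vb e) * (-(∑ i : {i // i ∈ Vg}, Dc i.1 e * lg i)
          - ∑ i : {i // i ∉ Vg}, Dc i.1 e * ll i)
      + ∑ i, (lg i - lgb i) * (∑ e, Dc i.1 e * v e - Pg i)
      + ∑ i, (ll i - llb i) * (∑ e, Dc i.1 e * v e + Pl i)
    = -∑ i, (Pg i - Pgb i) * (gradC Pg i - gradC Pgb i)
      + ∑ i, (Pl i - Plb i) * (gradU Pl i - gradU Plb i)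
      - ∑ i, ωg i * (Pg i - Pgb i) + ∑ i, ωl i * (Pl i - Plb i) := by
  have hPg : ∑ i, (Pg i - Pgb i) * (-(gradC Pg i) + lg i - ωg i)
      = -∑ i, (Pg i - Pgb i) * (gradC Pg i - gradC Pgb i)
        + ∑ i, (lg i - lgb i) * (Pg i - Pgb i) - ∑ i, ωg i * (Pg i - Pgb i) := by
    rw [← sum_neg_distrib, ← sum_add_distrib, ← sum_sub_distrib]
    exact sum_congr rfl fun i _ => by linear_combination (Pgb i - Pg i) * heqPg i
  have hPl : ∑ i, (Pl i - Plb i) * (gradU Pl i - ll i + ωl i)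
      = ∑ i, (Pl i - Plb i) * (gradU Pl i - gradU Plb i)
        - ∑ i, (ll i - llb i) * (Pl i - Plb i) + ∑ i, ωl i * (Pl i - Plb i) := by
    rw [← sum_sub_distrib, ← sum_add_distrib]
    exact sum_congr rfl fun i _ => by linear_combination (Plb i - Pl i) * heqPlc i
  linear_combination hPg + hPl + primalDual_communication_balance heqv heqlg heqll

end Controller

theorem hasDerivAt_HbarC_of_primalDual {V : Type*} [Fintype V] [DecidableEq V] {Vg : Finset V}
    {Ec : Type*} [Fintype Ec]
    {τg τlg : {i // i ∈ Vg} → ℝ} {τl τll : {i // i ∉ Vg} → ℝ} {τv : Ec → ℝ}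
    (hτg : ∀ i, τg i ≠ 0) (hτlg : ∀ i, τlg i ≠ 0) (hτl : ∀ i, τl i ≠ 0)
    (hτll : ∀ i, τll i ≠ 0) (hτv : ∀ e, τv e ≠ 0)
    {Dc : V → Ec → ℝ} {gradC : ({i // i ∈ Vg} → ℝ) → {i // i ∈ Vg} → ℝ}
    {gradU : ({i // i ∉ Vg} → ℝ) → {i // i ∉ Vg} → ℝ}
    {Pg lg : ℝ → {i // i ∈ Vg} → ℝ} {Pl ll : ℝ → {i // i ∉ Vg} → ℝ} {v : ℝ → Ec → ℝ}
    {ωg : {i // i ∈ Vg} → ℝ} {ωl : {i // i ∉ Vg} → ℝ} {t : ℝ}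
    (hPgdot : ∀ i, HasDerivAt (fun s => Pg s i) ((-(gradC (Pg t) i) + lg t i - ωg i) / τg i) t)
    (hPldot : ∀ i, HasDerivAt (fun s => Pl s i) ((gradU (Pl t) i - ll t i + ωl i) / τl i) t)
    (hvdot : ∀ e, HasDerivAt (fun s => v s e)
      ((-(∑ i : {i // i ∈ Vg}, Dc i.1 e * lg t i) - ∑ i : {i // i ∉ Vg}, Dc i.1 e * ll t i)
        / τv e) t)
    (hlgdot : ∀ i, HasDerivAt (fun s => lg s i) ((∑ e, Dc i.1 e * v t e - Pg t i) / τlg i) t)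
    (hlldot : ∀ i, HasDerivAt (fun s => ll s i) ((∑ e, Dc i.1 e * v t e + Pl t i) / τll i) t)
    {Pgb lgb : {i // i ∈ Vg} → ℝ} {Plb llb : {i // i ∉ Vg} → ℝ} {vb : Ec → ℝ}
    (heqPg : ∀ i, 0 = -(gradC Pgb i) + lgb i - 0)
    (heqPlc : ∀ i, 0 = gradU Plb i - llb i + 0)
    (heqv : ∀ e, 0 = -(∑ i : {i // i ∈ Vg}, Dc i.1 e * lgb i)
      - ∑ i : {i // i ∉ Vg}, Dc i.1 e * llb i)
    (heqlg : ∀ i, 0 = ∑ e, Dc i.1 e * vb e - Pgb i)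
    (heqll : ∀ i, 0 = ∑ e, Dc i.1 e * vb e + Plb i) :
    HasDerivAt (fun s => HbarC Vg τg τlg τl τll τv Pgb lgb Plb llb vb
        (Pg s) (lg s) (Pl s) (ll s) (v s))
      (-∑ i, (Pg t i - Pgb i) * (gradC (Pg t) i - gradC Pgb i)
        + ∑ i, (Pl t i - Plb i) * (gradU (Pl t) i - gradU Plb i)
        - ∑ i, ωg i * (Pg t i - Pgb i) + ∑ i, ωl i * (Pl t i - Plb i)) t := by
  refine ((((hasDerivAt_half_sum_mul_sq_sub hτg hPgdot).add
    (hasDerivAt_half_sum_mul_sq_sub hτl hPldot)).add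
    (hasDerivAt_half_sum_mul_sq_sub hτv hvdot)).add
    (hasDerivAt_half_sum_mul_sq_sub hτlg hlgdot)).add
    (hasDerivAt_half_sum_mul_sq_sub hτll hlldot) |>.congr_deriv ?_
  exact primalDual_power_balance gradC gradU ωg ωl heqPg heqPlc heqv heqlg heqll

section ClosedLoop

variable {V : Type*} [Fintype V] [DecidableEq V] {Vg : Finset V} {Ec : Type*} [Fintype Ec]
  {M A T Xd Xd' Ef Bs : V → ℝ} {B : V → V → ℝ} {Qbar : {i // i ∉ Vg} → ℝ}

lemma fluxDecay_eq {δ E : V → ℝ} {i : V} (hi : i ∈ Vg) (hE : E i ≠ 0) (hX : Xd i - Xd' i ≠ 0) :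
    Ef i - E i - (Xd i - Xd' i) * (E i)⁻¹ * reactiveQ B Bs δ E i
      = -(Xd i - Xd' i) * gradEHp Vg Xd Xd' Ef Bs B δ E i := by
  rw [reactiveQ_eq_mul_reactiveCurrent, gradEHp, if_pos hi]
  field_simp
  ring

lemma decayRate_eq (hB : ∀ i j, B i j = B j i) (xbar : (V → ℝ) × ({i // i ∈ Vg} → ℝ) × (V → ℝ))
    (hxbar : ∀ i ∈ Vg, gradEHp Vg Xd Xd' Ef Bs B xbar.1 xbar.2.2 i = 0)
    (τg τlg : {i // i ∈ Vg} → ℝ) (τl τll : {i // i ∉ Vg} → ℝ) (τv : Ec → ℝ)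
    (Pgb lgb : {i // i ∈ Vg} → ℝ) (Plb llb : {i // i ∉ Vg} → ℝ) (vb : Ec → ℝ)
    (gradC : ({i // i ∈ Vg} → ℝ) → {i // i ∈ Vg} → ℝ)
    (gradU : ({i // i ∉ Vg} → ℝ) → {i // i ∉ Vg} → ℝ)
    (δ ω E : V → ℝ) (Pg lg : {i // i ∈ Vg} → ℝ) (Pl ll : {i // i ∉ Vg} → ℝ) (v : Ec → ℝ) :
    decayRate Vg M A T Xd Xd' Ef Bs B xbar Qbar τg τlg τl τll τv Pgb lgb Plb llb vb gradC gradU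
        δ ω E Pg lg Pl ll v
      = -(∑ i : {i // i ∈ Vg}, A i * ω i ^ 2) - ∑ i : {i // i ∉ Vg}, A i * ω i ^ 2
        - ∑ i : {i // i ∈ Vg}, (Xd i - Xd' i) / T i * gradEHp Vg Xd Xd' Ef Bs B δ E i ^ 2
        - ∑ i : {i // i ∈ Vg}, (Pg i - Pgb i) * (gradC Pg i - gradC Pgb i)
        + ∑ i : {i // i ∉ Vg}, (Pl i - Plb i) * (gradU Pl i - gradU Plb i) := by
  unfold decayRate
  congr 3
  refine sum_congr rfl fun i _ => ?_
  rw [(hasDerivAt_HbarTot_update xbar Qbar hB τg τlg τl τll τv Pgb lgb Plb llb vb δ _ E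
    Pg lg Pl ll v i.2).deriv, hxbar i i.2, sub_zero]

theorem hasDerivAt_HbarP_add_HbarA_of_dynamics (hB : ∀ i j, B i j = B j i)
    (hM : ∀ i, M i ≠ 0) (hX : ∀ i, Xd i - Xd' i ≠ 0)
    {δ ω E : ℝ → V → ℝ} {Pg : {i // i ∈ Vg} → ℝ} {Pl : {i // i ∉ Vg} → ℝ} {t : ℝ}
    (hE : ∀ i, E t i ≠ 0)
    (hδdot : ∀ i, HasDerivAt (fun s => δ s i) (ω t i) t)
    (hωdot : ∀ i (hi : i ∈ Vg), HasDerivAt (fun s => ω s i)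
      ((-(activeP B (δ t) (E t) i) - A i * ω t i + Pg ⟨i, hi⟩) / M i) t)
    (hEdotg : ∀ i, i ∈ Vg → HasDerivAt (fun s => E s i)
      ((Ef i - E t i - (Xd i - Xd' i) * (E t i)⁻¹ * reactiveQ B Bs (δ t) (E t) i) / T i) t)
    (hEdotl : ∀ i, i ∉ Vg → ∃ d, HasDerivAt (fun s => E s i) d t)
    (hPalg : ∀ i (hi : i ∉ Vg), activeP B (δ t) (E t) i = -(A i * ω t i) - Pl ⟨i, hi⟩)
    (hQalg : ∀ i (hi : i ∉ Vg), reactiveQ B Bs (δ t) (E t) i = Qbar ⟨i, hi⟩)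
    {δb Eb : V → ℝ} {Pgb : {i // i ∈ Vg} → ℝ} {Plb : {i // i ∉ Vg} → ℝ}
    (heqω : ∀ i (hi : i ∈ Vg), 0 = -(activeP B δb Eb i) - A i * 0 + Pgb ⟨i, hi⟩)
    (heqE : ∀ i ∈ Vg, gradEHp Vg Xd Xd' Ef Bs B δb Eb i = 0)
    (heqPl : ∀ i (hi : i ∉ Vg), activeP B δb Eb i = -(A i * 0) - Plb ⟨i, hi⟩) :
    HasDerivAt (fun s => HbarP Vg M Xd Xd' Ef Bs B (δb, 0, Eb) (δ s, fun i => M i * ω s i, E s)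
        + HbarA Vg M Xd Xd' Ef Bs B (δb, 0, Eb) Qbar (E s))
      (-(∑ i : {i // i ∈ Vg}, A i * ω t i ^ 2) - ∑ i : {i // i ∉ Vg}, A i * ω t i ^ 2
        - ∑ i : {i // i ∈ Vg}, (Xd i - Xd' i) / T i * gradEHp Vg Xd Xd' Ef Bs B (δ t) (E t) i ^ 2
        + ∑ i : {i // i ∈ Vg}, ω t i * (Pg i - Pgb i)
        - ∑ i : {i // i ∉ Vg}, ω t i * (Pl i - Plb i)) t := by
  have hEdiff : ∀ i, ∃ d, HasDerivAt (fun s => E s i) d t := fun i =>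
    if hi : i ∈ Vg then ⟨_, hEdotg i hi⟩ else hEdotl i hi
  choose dE hdE using hEdiff
  have hp : ∀ i : {i // i ∈ Vg}, HasDerivAt (fun s => M i * ω s i)
      (-(activeP B (δ t) (E t) i) - A i * ω t i + Pg i) t := fun i =>
    ((hωdot i i.2).const_mul (M i)).congr_deriv (mul_div_cancel₀ _ (hM i))
  refine (hasDerivAt_HbarP_add_HbarA_comp _ Qbar hB hδdot hp hdE fun i _ => hE i).congr_deriv ?_
  dsimp only [Pi.zero_apply]
  set G := gradEHp Vg Xd Xd' Ef Bs B (δ t) (E t)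
  have hgen : ∀ i : {i // i ∈ Vg}, (activeP B (δ t) (E t) i - activeP B δb Eb i) * ω t i
        + (M i * ω t i - 0) / M i * (-(activeP B (δ t) (E t) i) - A i * ω t i + Pg i)
        + (G i - gradEHp Vg Xd Xd' Ef Bs B δb Eb i) * dE i
      = -(A i * ω t i ^ 2) - (Xd i - Xd' i) / T i * G i ^ 2 + ω t i * (Pg i - Pgb i) := by
    intro i
    have hdEi : dE i = -((Xd i - Xd' i) / T i) * G i := by
      rw [(hdE i).unique (hEdotg i i.2), fluxDecay_eq i.2 (hE i) (hX i)]
      ring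
    rw [hdEi, heqE i i.2, sub_zero, mul_div_cancel_left₀ _ (hM i)]
    linear_combination (-ω t i) * heqω i i.2
  have hload : ∀ i : {i // i ∉ Vg}, (activeP B (δ t) (E t) i - activeP B δb Eb i) * ω t i
        + (G i - Qbar i / E t i) * dE i = -(A i * ω t i ^ 2) - ω t i * (Pl i - Plb i) := by
    intro i
    have hGi : G i = Qbar i / E t i := by
      rw [eq_div_iff (hE i), mul_comm, ← hQalg i i.2, reactiveQ_eq_mul_reactiveCurrent]
      simp [G, gradEHp, i.2]
    rw [hGi, hPalg i i.2, heqPl i i.2]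
    ring
  simp only [hgen, hload, sum_add_distrib, sum_sub_distrib, sum_neg_distrib]
  ring

end ClosedLoop

theorem closed_loop_energy_decay_general
    {V : Type*} [Fintype V] [DecidableEq V] {Ec : Type*} [Fintype Ec]
    (Vg : Finset V)
    -- network and generator parameters
    (M A T Xd Xd' Ef Bs : V → ℝ) (B : V → V → ℝ)
    (hM : ∀ i, 0 < M i) (hA : ∀ i, 0 < A i) (hT : ∀ i, 0 < T i)
    (hX : ∀ i, Xd' i < Xd i)
    (hBsym : ∀ i j, B i j = B j i)
    -- constant reactive power demands at the loads
    (Qbar : {i // i ∉ Vg} → ℝ)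
    -- communication graph incidence matrix and positive diagonal controller gains
    (Dc : V → Ec → ℝ)
    (τg τlg : {i // i ∈ Vg} → ℝ) (τl τll : {i // i ∉ Vg} → ℝ) (τv : Ec → ℝ)
    (hτg : ∀ i, 0 < τg i) (hτlg : ∀ i, 0 < τlg i) (hτl : ∀ i, 0 < τl i)
    (hτll : ∀ i, 0 < τll i) (hτv : ∀ e, 0 < τv e)
    -- convex cost and concave utility, with their gradients
    (C : ({i // i ∈ Vg} → ℝ) → ℝ) (gradC : ({i // i ∈ Vg} → ℝ) → {i // i ∈ Vg} → ℝ)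
    (hCconv : ConvexOn ℝ Set.univ C)
    (hgradC : ∀ x i, HasDerivAt (fun s => C (Function.update x i s)) (gradC x i) (x i))
    (U : ({i // i ∉ Vg} → ℝ) → ℝ) (gradU : ({i // i ∉ Vg} → ℝ) → {i // i ∉ Vg} → ℝ)
    (hUconc : ConcaveOn ℝ Set.univ U)
    (hgradU : ∀ x i, HasDerivAt (fun s => U (Function.update x i s)) (gradU x i) (x i))
    -- the closed-loop trajectory
    (δ ω E : ℝ → V → ℝ)
    (Pg lg : ℝ → {i // i ∈ Vg} → ℝ) (Pl ll : ℝ → {i // i ∉ Vg} → ℝ) (v : ℝ → Ec → ℝ)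
    (hEpos : ∀ t i, 0 < E t i)
    -- physical dynamics: δ̇ᵢ = ωᵢ on all nodes
    (hδdot : ∀ t i, HasDerivAt (fun s => δ s i) (ω t i) t)
    -- swing dynamics at the generators: Mᵢω̇ᵢ = -Pᵢ - Aᵢωᵢ + P_{gi}
    (hωdot : ∀ t i (hi : i ∈ Vg), HasDerivAt (fun s => ω s i)
      ((-(activeP B (δ t) (E t) i) - A i * ω t i + Pg t ⟨i, hi⟩) / M i) t)
    -- flux-decay dynamics at the generators: TᵢĖᵢ = Efᵢ - Eᵢ - (Xdᵢ-Xd'ᵢ)Eᵢ⁻¹Qᵢ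
    (hEdotg : ∀ t i, i ∈ Vg → HasDerivAt (fun s => E s i)
      ((Ef i - E t i - (Xd i - Xd' i) * (E t i)⁻¹ * reactiveQ B Bs (δ t) (E t) i) / T i) t)
    -- the load voltages are differentiable curves
    (hEdotl : ∀ t i, i ∉ Vg → ∃ d, HasDerivAt (fun s => E s i) d t)
    -- algebraic constraints at the loads: Pᵢ = -Aᵢωᵢ - P_{li} and Qᵢ = Q̄_{li}
    (hPalg : ∀ t i (hi : i ∉ Vg), activeP B (δ t) (E t) i = -(A i * ω t i) - Pl t ⟨i, hi⟩)
    (hQalg : ∀ t i (hi : i ∉ Vg), reactiveQ B Bs (δ t) (E t) i = Qbar ⟨i, hi⟩)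
    -- controller dynamics: τ_g Ṗ_g = -∇C(P_g) + λ_g - ω_g
    (hPgdot : ∀ t i, HasDerivAt (fun s => Pg s i)
      ((-(gradC (Pg t) i) + lg t i - ω t i.1) / τg i) t)
    -- τ_l Ṗ_l = ∇U(P_l) - λ_l + ω_l
    (hPldot : ∀ t i, HasDerivAt (fun s => Pl s i)
      ((gradU (Pl t) i - ll t i + ω t i.1) / τl i) t)
    -- τ_v v̇ = -D_cgᵀλ_g - D_clᵀλ_l
    (hvdot : ∀ t e, HasDerivAt (fun s => v s e)
      ((-(∑ i : {i // i ∈ Vg}, Dc i.1 e * lg t i)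
        - ∑ i : {i // i ∉ Vg}, Dc i.1 e * ll t i) / τv e) t)
    -- τ_{lg} λ̇_g = D_cg v - P_g
    (hlgdot : ∀ t i, HasDerivAt (fun s => lg s i)
      ((∑ e, Dc i.1 e * v t e - Pg t i) / τlg i) t)
    -- τ_{ll} λ̇_l = D_cl v + P_l
    (hlldot : ∀ t i, HasDerivAt (fun s => ll s i)
      ((∑ e, Dc i.1 e * v t e + Pl t i) / τll i) t)
    -- the equilibrium (δ̄, ω̄ = 0, Ē, P̄_g, P̄_l, v̄, λ̄_g, λ̄_l)
    (δb Eb : V → ℝ) (Pgb lgb : {i // i ∈ Vg} → ℝ) (Plb llb : {i // i ∉ Vg} → ℝ)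
    (vb : Ec → ℝ)
    (hEbpos : ∀ i, 0 < Eb i)
    (heqω : ∀ i (hi : i ∈ Vg), 0 = -(activeP B δb Eb i) - A i * 0 + Pgb ⟨i, hi⟩)
    (heqE : ∀ i, i ∈ Vg →
      0 = Ef i - Eb i - (Xd i - Xd' i) * (Eb i)⁻¹ * reactiveQ B Bs δb Eb i)
    (heqPl : ∀ i (hi : i ∉ Vg), activeP B δb Eb i = -(A i * 0) - Plb ⟨i, hi⟩)
    (heqPg : ∀ i, 0 = -(gradC Pgb i) + lgb i - 0)
    (heqPlc : ∀ i, 0 = gradU Plb i - llb i + 0)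
    (heqv : ∀ e, 0 = -(∑ i : {i // i ∈ Vg}, Dc i.1 e * lgb i)
      - ∑ i : {i // i ∉ Vg}, Dc i.1 e * llb i)
    (heqlg : ∀ i, 0 = ∑ e, Dc i.1 e * vb e - Pgb i)
    (heqll : ∀ i, 0 = ∑ e, Dc i.1 e * vb e + Plb i) :
    -- conclusion: for all t, dH̄/dt equals the dissipation expression, which is ≤ 0
    ∀ t : ℝ,
      HasDerivAt
        (fun s => HbarTot Vg M Xd Xd' Ef Bs B (δb, 0, Eb) Qbar τg τlg τl τll τv
          Pgb lgb Plb llb vb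
          (δ s) (fun i => M i.1 * ω s i.1) (E s) (Pg s) (lg s) (Pl s) (ll s) (v s))
        (decayRate Vg M A T Xd Xd' Ef Bs B (δb, 0, Eb) Qbar τg τlg τl τll τv
          Pgb lgb Plb llb vb gradC gradU
          (δ t) (ω t) (E t) (Pg t) (lg t) (Pl t) (ll t) (v t)) t
      ∧
      decayRate Vg M A T Xd Xd' Ef Bs B (δb, 0, Eb) Qbar τg τlg τl τll τv
          Pgb lgb Plb llb vb gradC gradU
          (δ t) (ω t) (E t) (Pg t) (lg t) (Pl t) (ll t) (v t) ≤ 0 := by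
  intro t
  have hXne : ∀ i, Xd i - Xd' i ≠ 0 := fun i => sub_ne_zero.2 (hX i).ne'
  have hgradEb : ∀ i ∈ Vg, gradEHp Vg Xd Xd' Ef Bs B δb Eb i = 0 := fun i hi => by
    have h := heqE i hi
    rw [fluxDecay_eq hi (hEbpos i).ne' (hXne i)] at h
    exact (mul_eq_zero.1 h.symm).resolve_left (neg_ne_zero.2 (hXne i))
  have hphys := hasDerivAt_HbarP_add_HbarA_of_dynamics hBsym (fun i => (hM i).ne') hXne
    (fun i => (hEpos t i).ne') (hδdot t) (hωdot t) (hEdotg t) (hEdotl t) (hPalg t) (hQalg t)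
    heqω hgradEb heqPl
  have hctrl := hasDerivAt_HbarC_of_primalDual (fun i => (hτg i).ne') (fun i => (hτlg i).ne')
    (fun i => (hτl i).ne') (fun i => (hτll i).ne') (fun e => (hτv e).ne') (hPgdot t) (hPldot t)
    (hvdot t) (hlgdot t) (hlldot t) heqPg heqPlc heqv heqlg heqll
  rw [decayRate_eq hBsym _ hgradEb]
  refine ⟨(hphys.add hctrl).congr_deriv (by ring), ?_⟩
  have hCmono := hCconv.sum_sub_mul_sub_nonneg hgradC Pgb (Pg t)
  have hUmono := hUconc.sum_sub_mul_sub_nonpos hgradU Plb (Pl t)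
  have hdampg : 0 ≤ ∑ i : {i // i ∈ Vg}, A i * ω t i ^ 2 :=
    sum_nonneg fun i _ => mul_nonneg (hA i).le (sq_nonneg _)
  have hdampl : 0 ≤ ∑ i : {i // i ∉ Vg}, A i * ω t i ^ 2 :=
    sum_nonneg fun i _ => mul_nonneg (hA i).le (sq_nonneg _)
  have hflux : 0 ≤ ∑ i : {i // i ∈ Vg},
      (Xd i - Xd' i) / T i * gradEHp Vg Xd Xd' Ef Bs B (δ t) (E t) i ^ 2 :=
    sum_nonneg fun i _ => mul_nonneg (div_nonneg (sub_nonneg.2 (hX i).le) (hT i).le) (sq_nonneg _)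
  linarith

/-- **Energy decay along closed-loop trajectories.**  Along differentiable solutions of
the structure-preserving power network (swing and flux-decay dynamics at the
generators, frequency-dependent loads with constant reactive demand) interconnected
with the primal-dual dynamic pricing controller, the total shifted energy
`H̄ = H̄p + H̄ₐ + H̄c` (Bregman shift at an equilibrium with `ω̄ = 0`) satisfies
`dH̄/dt = -ω_gᵀA_gω_g - ω_lᵀA_lω_l - (∇_{E_g}H̄)ᵀ R_g ∇_{E_g}H̄
  - (P_g-P̄_g)ᵀ(∇C(P_g)-∇C(P̄_g)) + (P_l-P̄_l)ᵀ(∇U(P_l)-∇U(P̄_l)) ≤ 0`. -/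
theorem closed_loop_energy_decay
    {V : Type*} [Fintype V] [DecidableEq V] {Ec : Type*} [Fintype Ec]
    (Vg : Finset V)
    -- network and generator parameters
    (M A T Xd Xd' Ef Bs : V → ℝ) (B : V → V → ℝ)
    (hM : ∀ i, 0 < M i) (hA : ∀ i, 0 < A i) (hT : ∀ i, 0 < T i)
    (hX : ∀ i, Xd' i < Xd i)
    (hBsym : ∀ i j, B i j = B j i) (hBdiag : ∀ i, B i i = 0)
    -- constant reactive power demands at the loads
    (Qbar : {i // i ∉ Vg} → ℝ) (hQbar : ∀ i, 0 ≤ Qbar i)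
    -- communication graph incidence matrix and positive diagonal controller gains
    (Dc : V → Ec → ℝ)
    (τg τlg : {i // i ∈ Vg} → ℝ) (τl τll : {i // i ∉ Vg} → ℝ) (τv : Ec → ℝ)
    (hτg : ∀ i, 0 < τg i) (hτlg : ∀ i, 0 < τlg i) (hτl : ∀ i, 0 < τl i)
    (hτll : ∀ i, 0 < τll i) (hτv : ∀ e, 0 < τv e)
    -- convex cost and concave utility, with their gradients
    (C : ({i // i ∈ Vg} → ℝ) → ℝ) (gradC : ({i // i ∈ Vg} → ℝ) → {i // i ∈ Vg} → ℝ)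
    (hCconv : ConvexOn ℝ Set.univ C)
    (hgradC : ∀ x i, HasDerivAt (fun s => C (Function.update x i s)) (gradC x i) (x i))
    (U : ({i // i ∉ Vg} → ℝ) → ℝ) (gradU : ({i // i ∉ Vg} → ℝ) → {i // i ∉ Vg} → ℝ)
    (hUconc : ConcaveOn ℝ Set.univ U)
    (hgradU : ∀ x i, HasDerivAt (fun s => U (Function.update x i s)) (gradU x i) (x i))
    -- the closed-loop trajectory
    (δ ω E : ℝ → V → ℝ)
    (Pg lg : ℝ → {i // i ∈ Vg} → ℝ) (Pl ll : ℝ → {i // i ∉ Vg} → ℝ) (v : ℝ → Ec → ℝ)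
    (hEpos : ∀ t i, 0 < E t i)
    -- physical dynamics: δ̇ᵢ = ωᵢ on all nodes
    (hδdot : ∀ t i, HasDerivAt (fun s => δ s i) (ω t i) t)
    -- swing dynamics at the generators: Mᵢω̇ᵢ = -Pᵢ - Aᵢωᵢ + P_{gi}
    (hωdot : ∀ t i (hi : i ∈ Vg), HasDerivAt (fun s => ω s i)
      ((-(activeP B (δ t) (E t) i) - A i * ω t i + Pg t ⟨i, hi⟩) / M i) t)
    -- flux-decay dynamics at the generators: TᵢĖᵢ = Efᵢ - Eᵢ - (Xdᵢ-Xd'ᵢ)Eᵢ⁻¹Qᵢ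
    (hEdotg : ∀ t i, i ∈ Vg → HasDerivAt (fun s => E s i)
      ((Ef i - E t i - (Xd i - Xd' i) * (E t i)⁻¹ * reactiveQ B Bs (δ t) (E t) i) / T i) t)
    -- the load voltages are differentiable curves
    (hEdotl : ∀ t i, i ∉ Vg → ∃ d, HasDerivAt (fun s => E s i) d t)
    -- algebraic constraints at the loads: Pᵢ = -Aᵢωᵢ - P_{li} and Qᵢ = Q̄_{li}
    (hPalg : ∀ t i (hi : i ∉ Vg), activeP B (δ t) (E t) i = -(A i * ω t i) - Pl t ⟨i, hi⟩)
    (hQalg : ∀ t i (hi : i ∉ Vg), reactiveQ B Bs (δ t) (E t) i = Qbar ⟨i, hi⟩)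
    -- controller dynamics: τ_g Ṗ_g = -∇C(P_g) + λ_g - ω_g
    (hPgdot : ∀ t i, HasDerivAt (fun s => Pg s i)
      ((-(gradC (Pg t) i) + lg t i - ω t i.1) / τg i) t)
    -- τ_l Ṗ_l = ∇U(P_l) - λ_l + ω_l
    (hPldot : ∀ t i, HasDerivAt (fun s => Pl s i)
      ((gradU (Pl t) i - ll t i + ω t i.1) / τl i) t)
    -- τ_v v̇ = -D_cgᵀλ_g - D_clᵀλ_l
    (hvdot : ∀ t e, HasDerivAt (fun s => v s e)
      ((-(∑ i : {i // i ∈ Vg}, Dc i.1 e * lg t i)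
        - ∑ i : {i // i ∉ Vg}, Dc i.1 e * ll t i) / τv e) t)
    -- τ_{lg} λ̇_g = D_cg v - P_g
    (hlgdot : ∀ t i, HasDerivAt (fun s => lg s i)
      ((∑ e, Dc i.1 e * v t e - Pg t i) / τlg i) t)
    -- τ_{ll} λ̇_l = D_cl v + P_l
    (hlldot : ∀ t i, HasDerivAt (fun s => ll s i)
      ((∑ e, Dc i.1 e * v t e + Pl t i) / τll i) t)
    -- the equilibrium (δ̄, ω̄ = 0, Ē, P̄_g, P̄_l, v̄, λ̄_g, λ̄_l)
    (δb Eb : V → ℝ) (Pgb lgb : {i // i ∈ Vg} → ℝ) (Plb llb : {i // i ∉ Vg} → ℝ)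
    (vb : Ec → ℝ)
    (hEbpos : ∀ i, 0 < Eb i)
    (heqω : ∀ i (hi : i ∈ Vg), 0 = -(activeP B δb Eb i) - A i * 0 + Pgb ⟨i, hi⟩)
    (heqE : ∀ i, i ∈ Vg →
      0 = Ef i - Eb i - (Xd i - Xd' i) * (Eb i)⁻¹ * reactiveQ B Bs δb Eb i)
    (heqPl : ∀ i (hi : i ∉ Vg), activeP B δb Eb i = -(A i * 0) - Plb ⟨i, hi⟩)
    (heqQl : ∀ i (hi : i ∉ Vg), reactiveQ B Bs δb Eb i = Qbar ⟨i, hi⟩)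
    (heqPg : ∀ i, 0 = -(gradC Pgb i) + lgb i - 0)
    (heqPlc : ∀ i, 0 = gradU Plb i - llb i + 0)
    (heqv : ∀ e, 0 = -(∑ i : {i // i ∈ Vg}, Dc i.1 e * lgb i)
      - ∑ i : {i // i ∉ Vg}, Dc i.1 e * llb i)
    (heqlg : ∀ i, 0 = ∑ e, Dc i.1 e * vb e - Pgb i)
    (heqll : ∀ i, 0 = ∑ e, Dc i.1 e * vb e + Plb i) :
    -- conclusion: for all t, dH̄/dt equals the dissipation expression, which is ≤ 0
    ∀ t : ℝ,
      HasDerivAt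
        (fun s => HbarTot Vg M Xd Xd' Ef Bs B (δb, 0, Eb) Qbar τg τlg τl τll τv
          Pgb lgb Plb llb vb
          (δ s) (fun i => M i.1 * ω s i.1) (E s) (Pg s) (lg s) (Pl s) (ll s) (v s))
        (decayRate Vg M A T Xd Xd' Ef Bs B (δb, 0, Eb) Qbar τg τlg τl τll τv
          Pgb lgb Plb llb vb gradC gradU
          (δ t) (ω t) (E t) (Pg t) (lg t) (Pl t) (ll t) (v t)) t
      ∧
      decayRate Vg M A T Xd Xd' Ef Bs B (δb, 0, Eb) Qbar τg τlg τl τll τv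
          Pgb lgb Plb llb vb gradC gradU
          (δ t) (ω t) (E t) (Pg t) (lg t) (Pl t) (ll t) (v t) ≤ 0 :=
  closed_loop_energy_decay_general Vg M A T Xd Xd' Ef Bs B hM hA hT hX hBsym Qbar Dc τg τlg τl τll
    τv hτg hτlg hτl hτll hτv C gradC hCconv hgradC U gradU hUconc hgradU δ ω E Pg lg Pl ll v hEpos
    hδdot hωdot hEdotg hEdotl hPalg hQalg hPgdot hPldot hvdot hlgdot hlldot δb Eb Pgb lgb Plb llb vb
    hEbpos heqω heqE heqPl heqPg heqPlc heqv heqlg heqll
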